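/- Let 𝒜 ∈ ℝ^{d₁×⋯×dₙ} be a tensor with multilinear rank (r₁,…,rₙ). Let I_i ⊆ [d_i], and set ℛ = 𝒜(I₁,…,Iₙ), C_i = 𝒜_(i)(:, ⊗_{j≠i} I_j), and U_i = C_i(I_i,:). Then the following are equivalent: (i) rank(U_i) = r_i for all i; (ii) 𝒜 = ℛ ×₁ (C₁U₁†) ×₂ ⋯ ×ₙ (CₙUₙ†); (iii) the multilinear rank of ℛ is (r₁,…,rₙ); (iv) rank(𝒜_(i)(I_i,:)) = r_i for all i = 1,…,n. Moreover, if any of these equivalent statements holds, then 𝒜 = 𝒜 ×₁ (C₁C₁†) ×₂ ⋯ ×ₙ (CₙCₙ†). -/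

import Mathlib

open scoped BigOperators
open Matrix

noncomputable section

namespace TCUR

/-- Euclidean norm of a finite real vector. -/
def enorm {ι : Type*} [Fintype ι] (x : ι → ℝ) : ℝ :=
  Real.sqrt (∑ i, x i ^ 2)

/-- Frobenius norm of a real matrix. -/
def frob {m n : Type*} [Fintype m] [Fintype n] (A : Matrix m n ℝ) : ℝ :=
  Real.sqrt (∑ i, ∑ j, A i j ^ 2)

/-- Spectral norm of a real matrix. -/
def spec {m n : Type*} [Fintype m] [Fintype n] (A : Matrix m n ℝ) : ℝ :=
  sSup ((fun x => enorm (A.mulVec x)) '' {x : n → ℝ | enorm x ≤ 1})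

/-- The four Penrose conditions: `B` is the Moore–Penrose pseudoinverse of `A`. -/
def IsMP {m n : Type*} [Fintype m] [Fintype n] (A : Matrix m n ℝ) (B : Matrix n m ℝ) : Prop :=
  A * B * A = A ∧ B * A * B = B ∧ (A * B)ᵀ = A * B ∧ (B * A)ᵀ = B * A

open Classical in
/-- Moore–Penrose pseudoinverse of a real matrix (def body). -/
def pinv {m n : Type*} [Fintype m] [Fintype n] (A : Matrix m n ℝ) : Matrix n m ℝ :=
  if h : ∃ B, IsMP A B then h.choose else 0

/-- `sval k A` is the `k`-th largest singular value of `A`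
(via the Eckart–Young characterization). -/
def sval {m n : Type*} [Fintype m] [Fintype n] (k : ℕ) (A : Matrix m n ℝ) : ℝ :=
  sInf ((fun B => spec (A - B)) '' {B : Matrix m n ℝ | B.rank < k})

/-- `IsBestRank r A Ar`: `Ar` is a best rank-`r` (Frobenius) approximation of `A`,
 e.g. a rank-`r` truncated SVD of `A`. -/
def IsBestRank {m n : Type*} [Fintype m] [Fintype n] (r : ℕ) (A Ar : Matrix m n ℝ) : Prop :=
  Ar.rank ≤ r ∧ ∀ B : Matrix m n ℝ, B.rank ≤ r → frob (A - Ar) ≤ frob (A - B)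

/-- Compact SVD data: `A = W * S * Vᵀ` with `W, V` having orthonormal columns and
`S` diagonal with positive diagonal entries. -/
def CompactSVD {m n : Type*} [Fintype m] [Fintype n] {r : ℕ} (A : Matrix m n ℝ)
    (W : Matrix m (Fin r) ℝ) (S : Matrix (Fin r) (Fin r) ℝ) (V : Matrix n (Fin r) ℝ) : Prop :=
  A = W * S * Vᵀ ∧ Wᵀ * W = 1 ∧ Vᵀ * V = 1 ∧ (∀ i j, i ≠ j → S i j = 0) ∧ ∀ i, 0 < S i i

/-- Coherence `μ(W) = (d/r) max_i ‖W(i,:)‖₂²` of a matrix with orthonormal columns. -/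
def coh {m r : Type*} [Fintype m] [Fintype r] (W : Matrix m r ℝ) : ℝ :=
  ((Fintype.card m : ℝ) / (Fintype.card r : ℝ)) * ⨆ i : m, ∑ j, W i j ^ 2

/-- Row submatrix with rows restricted to `I`. -/
def rowsub {m k : Type*} (M : Matrix m k ℝ) (I : Finset m) : Matrix {x // x ∈ I} k ℝ :=
  M.submatrix Subtype.val id

/-- Probability, with respect to the uniform distribution on the finite sample space
`{ω : Ω | cond ω}`, of the event `{ω | event ω}`. -/
def uniformProb {Ω : Type*} [Fintype Ω] (cond event : Ω → Prop) : ℝ :=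
  (Nat.card {ω : Ω // cond ω ∧ event ω} : ℝ) / (Nat.card {ω : Ω // cond ω} : ℝ)

variable {n : ℕ}

/-- Mode-`k` unfolding of an `n`-mode tensor: the matrix whose columns are the
mode-`k` fibers of the tensor. -/
def unfold {ι : Fin n → Type*} (A : ((i : Fin n) → ι i) → ℝ) (k : Fin n) :
    Matrix (ι k) ((j : {j : Fin n // j ≠ k}) → ι j.1) ℝ :=
  fun x y => A fun i => if h : i = k then cast (congrArg ι h.symm) x else y ⟨i, h⟩

/-- Tucker (all-modes) product `T ×₁ M 1 ×₂ ⋯ ×ₙ M n`. -/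
def tucker {ι κ : Fin n → Type*} [∀ i, Fintype (κ i)]
    (T : ((i : Fin n) → κ i) → ℝ) (M : (i : Fin n) → Matrix (ι i) (κ i) ℝ) :
    ((i : Fin n) → ι i) → ℝ :=
  fun x => ∑ y : (i : Fin n) → κ i, (∏ i, M i (x i) (y i)) * T y

/-- The subtensor with mode-`i` indices restricted to `I i`. -/
def subT {ι : Fin n → Type*} (A : ((i : Fin n) → ι i) → ℝ)
    (I : (i : Fin n) → Finset (ι i)) : ((i : Fin n) → {x // x ∈ I i}) → ℝ :=
  fun x => A fun i => (x i).1

/-- Frobenius norm of a tensor. -/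
def tfrob {ι : Fin n → Type*} [∀ i, Fintype (ι i)] (A : ((i : Fin n) → ι i) → ℝ) : ℝ :=
  Real.sqrt (∑ x : (i : Fin n) → ι i, A x ^ 2)

/-- `Cmat A J i = 𝒜_(i)(:,J_i)`: the mode-`i` unfolding restricted to the columns `J i`. -/
def Cmat {ι : Fin n → Type*} (A : ((i : Fin n) → ι i) → ℝ)
    (J : (i : Fin n) → Finset ((j : {j : Fin n // j ≠ i}) → ι j.1)) (i : Fin n) :
    Matrix (ι i) {y // y ∈ J i} ℝ :=
  (unfold A i).submatrix id Subtype.val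

/-- `Umat A I J i = 𝒜_(i)(I_i,J_i)`. -/
def Umat {ι : Fin n → Type*} (A : ((i : Fin n) → ι i) → ℝ)
    (I : (i : Fin n) → Finset (ι i))
    (J : (i : Fin n) → Finset ((j : {j : Fin n // j ≠ i}) → ι j.1)) (i : Fin n) :
    Matrix {x // x ∈ I i} {y // y ∈ J i} ℝ :=
  (unfold A i).submatrix Subtype.val Subtype.val

/-- The Chidori column index set `⊗_{j ≠ i} I j`. -/
def chidoriJ {ι : Fin n → Type*} (I : (i : Fin n) → Finset (ι i)) (i : Fin n) :
    Finset ((j : {j : Fin n // j ≠ i}) → ι j.1) :=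
  Fintype.piFinset fun j => I j.1

/-- `σ_max(𝒜) = max_j σ₁(𝒜_(j))`. -/
def tsmax {ι : Fin n → Type*} [∀ i, Fintype (ι i)] (A : ((i : Fin n) → ι i) → ℝ) : ℝ :=
  ⨆ j, sval 1 (unfold A j)

/-- `σ_min(𝒜) = min_j σ_{r_j}(𝒜_(j))`. -/
def tsmin {ι : Fin n → Type*} [∀ i, Fintype (ι i)] (A : ((i : Fin n) → ι i) → ℝ)
    (r : Fin n → ℕ) : ℝ :=
  ⨅ j, sval (r j) (unfold A j)

/-!
Everything reduces to the unfoldings. If a submatrix `U = M(I,J)` has the rank of `M`, then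
`M(:,J)` spans the column space and `M(I,:)` the row space of `M`, whence
`M = M(:,J) U† M(I,:)` and `M(:,J) M(:,J)† M = M`. For `M = 𝒜_(i)` either identity has the form
`𝒜_(i) = M_i 𝒜_(i)(I_i,:)`, i.e. every entry of `𝒜` is a fixed combination of entries whose
`i`-th index lies in `I_i`; doing this one mode after another writes `𝒜` as `ℛ ×₁ M₁ ⋯ ×ₙ Mₙ`.
Conversely, any Tucker product `𝒜 = ℛ ×₁ M₁ ⋯ ×ₙ Mₙ` has `rank 𝒜_(i) ≤ rank ℛ_(i)`, and `ℛ_(i)`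
is `U_i` with relabelled columns. Together with `U_i ⊆ 𝒜_(i)(I_i,:) ⊆ 𝒜_(i)` this pins all the
ranks in (i), (iii) and (iv) to `r_i`.
-/

section PseudoInverse

variable {m k : Type*} [Fintype m] [Fintype k]

theorem exists_isMP_of_isSelfAdjoint [DecidableEq m] {S : Matrix m m ℝ} (hS : IsSelfAdjoint S) :
    ∃ P : Matrix m m ℝ, IsMP S P ∧ Pᵀ = P := by
  have hmul (f g : ℝ → ℝ) : cfc f S * cfc g S = cfc (fun x => f x * g x) S :=
    (cfc_mul f g S (S.finite_spectrum.continuousOn f) (S.finite_spectrum.continuousOn g)).symm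
  have hsymm (f : ℝ → ℝ) : (cfc f S)ᵀ = cfc f S := by
    rw [← conjTranspose_eq_transpose_of_trivial]; exact cfc_predicate f S
  have hid : cfc (fun x => x) S = S := cfc_id' ℝ S
  -- since `0⁻¹ = 0`, this inverts `S` on its range and vanishes on its kernel
  set P := cfc (fun x : ℝ => x⁻¹) S with hP
  refine ⟨P, ⟨?_, ?_, ?_, ?_⟩, hsymm _⟩ <;> rw [← hid, hP] <;> simp only [hmul, hsymm]
  · simp only [mul_inv_mul_cancel]
  · congr 1 with x
    simpa using mul_inv_mul_cancel x⁻¹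

theorem exists_isMP (A : Matrix m k ℝ) : ∃ B, IsMP A B := by
  classical
  have hAt : Aᴴ = Aᵀ := conjTranspose_eq_transpose_of_trivial A
  have hS : IsSelfAdjoint (Aᵀ * A) := by rw [← hAt]; exact isHermitian_conjTranspose_mul_self A
  obtain ⟨P, ⟨hSPS, hPSP, -, hPS⟩, hP⟩ := exists_isMP_of_isSelfAdjoint hS
  have hAPS : A * (P * (Aᵀ * A)) = A := by
    have h : Aᴴ * A * (P * (Aᵀ * A) - 1) = 0 := by
      rw [hAt, Matrix.mul_sub, ← Matrix.mul_assoc, hSPS, Matrix.mul_one, sub_self]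
    rwa [conjTranspose_mul_self_mul_eq_zero, Matrix.mul_sub, Matrix.mul_one, sub_eq_zero] at h
  refine ⟨P * Aᵀ, ?_, ?_, ?_, ?_⟩
  · rw [Matrix.mul_assoc, Matrix.mul_assoc, hAPS]
  · rw [Matrix.mul_assoc P, ← Matrix.mul_assoc, hPSP]
  · rw [transpose_mul, transpose_mul, transpose_transpose, hP, Matrix.mul_assoc]
  · rwa [Matrix.mul_assoc]

theorem mul_pinv_mul (A : Matrix m k ℝ) : A * pinv A * A = A := by
  rw [pinv, dif_pos (exists_isMP A)]
  exact (exists_isMP A).choose_spec.1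

end PseudoInverse

section Factorization

variable {m k m' k' : Type*} [Fintype k] [Fintype m'] [Fintype k']

theorem exists_eq_mul_of_range_le {M : Matrix m k ℝ} {N : Matrix m k' ℝ}
    (h : LinearMap.range N.mulVecLin ≤ LinearMap.range M.mulVecLin) :
    ∃ W : Matrix k k' ℝ, N = M * W := by
  classical
  choose w hw using fun j => h ⟨Pi.single j 1, rfl⟩
  refine ⟨(of w)ᵀ, ext fun i j => ?_⟩
  have hij := congrFun (hw j) i
  simp only [mulVecLin_apply, mulVec_single_one, col_apply] at hij
  rw [← hij]
  rfl

theorem exists_eq_submatrix_mul_of_rank_eq (M : Matrix m k ℝ) (g : k' → k)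
    (h : (M.submatrix id g).rank = M.rank) : ∃ W : Matrix k' k ℝ, M = M.submatrix id g * W := by
  classical
  have hle : LinearMap.range (M.submatrix id g).mulVecLin ≤ LinearMap.range M.mulVecLin := by
    have hC : M.submatrix id g = M * (1 : Matrix k k ℝ).submatrix id g :=
      (M.mul_submatrix_one (Equiv.refl k) g).symm
    rw [hC, mulVecLin_mul]
    exact LinearMap.range_comp_le_range _ _
  exact exists_eq_mul_of_range_le (Submodule.eq_of_le_of_finrank_le hle h.ge).ge

theorem exists_eq_mul_submatrix_of_rank_eq [Fintype m] (M : Matrix m k ℝ) (f : m' → m)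
    (h : (M.submatrix f id).rank = M.rank) : ∃ Z : Matrix m m' ℝ, M = Z * M.submatrix f id := by
  obtain ⟨W, hW⟩ := exists_eq_submatrix_mul_of_rank_eq Mᵀ f
    (by rwa [← transpose_submatrix, rank_transpose, rank_transpose])
  exact ⟨Wᵀ, by simpa [← transpose_submatrix, transpose_mul] using congrArg transpose hW⟩

theorem submatrix_mul_pinv_mul_of_rank_eq [Fintype m] (M : Matrix m k ℝ) (g : k' → k)
    (h : (M.submatrix id g).rank = M.rank) :
    M.submatrix id g * pinv (M.submatrix id g) * M = M := by
  obtain ⟨W, hW⟩ := exists_eq_submatrix_mul_of_rank_eq M g h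
  set C := M.submatrix id g
  calc C * pinv C * M = C * pinv C * C * W := by rw [Matrix.mul_assoc _ C, ← hW]
    _ = M := by rw [mul_pinv_mul, ← hW]

theorem eq_submatrix_mul_pinv_mul_of_rank_eq [Fintype m] (M : Matrix m k ℝ) (f : m' → m)
    (g : k' → k)
    (h : (M.submatrix f g).rank = M.rank) :
    M = M.submatrix id g * pinv (M.submatrix f g) * M.submatrix f id := by
  set R := M.submatrix f id
  set U := M.submatrix f g
  have hR : R.rank = M.rank :=
    (rank_submatrix_le M f id).antisymm (h ▸ rank_submatrix_le R id g)
  obtain ⟨Z, hZ⟩ : ∃ Z : Matrix m m' ℝ, M = Z * R :=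
    exists_eq_mul_submatrix_of_rank_eq M f hR
  obtain ⟨W, hW⟩ : ∃ W : Matrix k' k ℝ, R = U * W :=
    exists_eq_submatrix_mul_of_rank_eq R g (h.trans hR.symm)
  have hC : M.submatrix id g = Z * U := by
    conv_lhs => rw [hZ]
    rfl
  calc M = Z * (U * W) := by rw [← hW, ← hZ]
    _ = Z * (U * pinv U * U) * W := by rw [mul_pinv_mul, Matrix.mul_assoc]
    _ = M.submatrix id g * pinv U * R := by rw [hC, hW]; simp only [Matrix.mul_assoc]

end Factorization

section Tensor

variable {ι κ : Fin n → Type*}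

theorem unfold_apply (A : ((i : Fin n) → ι i) → ℝ) (k : Fin n) (a : ι k)
    (z : (j : {j : Fin n // j ≠ k}) → ι j.1) :
    unfold A k a z = A ((Equiv.piSplitAt k ι).symm (a, z)) := by
  simp only [unfold]
  congr 1 with i
  split_ifs with h
  · subst h; simp
  · simp [h]

theorem unfold_apply_update (A : ((i : Fin n) → ι i) → ℝ) (k : Fin n) (a : ι k)
    (x : (i : Fin n) → ι i) : unfold A k a (fun j => x j.1) = A (Function.update x k a) := by
  rw [unfold_apply]
  rfl

theorem unfold_tucker [∀ i, Fintype (κ i)] (T : ((i : Fin n) → κ i) → ℝ)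
    (M : (i : Fin n) → Matrix (ι i) (κ i) ℝ) (j : Fin n) :
    unfold (tucker T M) j = M j * unfold T j *
      of fun (y : (k : {k : Fin n // k ≠ j}) → κ k.1)
        (z : (k : {k : Fin n // k ≠ j}) → ι k.1) => ∏ k, M k.1 (z k) (y k) := by
  ext a z
  rw [unfold_apply, tucker, ← (Equiv.piSplitAt j κ).symm.sum_comp, Fintype.sum_prod_type,
    mul_apply, Finset.sum_comm]
  simp only [mul_apply, of_apply, Finset.sum_mul, unfold_apply]
  refine Finset.sum_congr rfl fun b _ => Finset.sum_congr rfl fun y _ => ?_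
  rw [Fintype.prod_eq_mul_prod_subtype_ne _ j]
  have hne (k : {k : Fin n // k ≠ j}) : (k : Fin n) = j ↔ False := iff_false_intro k.2
  simp only [Equiv.piSplitAt_symm_apply, hne, dite_false, dite_true]
  ring

theorem eq_tucker_of_forall_eq_sum_update [∀ i, Fintype (κ i)]
    (A : ((i : Fin n) → ι i) → ℝ) (e : (i : Fin n) → κ i → ι i)
    (M : (i : Fin n) → Matrix (ι i) (κ i) ℝ)
    (h : ∀ k x, A x = ∑ b, M k (x k) b * A (Function.update x k (e k b))) :
    A = tucker (fun y => A fun i => e i (y i)) M := by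
  induction n with
  | zero =>
    funext x
    simp only [tucker, Finset.univ_eq_empty, Finset.prod_empty, one_mul, Fintype.sum_unique]
    congr 1
    exact Subsingleton.elim _ _
  | succ N ih =>
    funext x
    have hslice (a : ι 0) : (fun z => A (Fin.cons a z)) = tucker
        (fun y => A (Fin.cons a fun i => e i.succ (y i))) fun i => M i.succ :=
      ih _ (fun i => e i.succ) _ fun k z => by
        simpa only [Fin.cons_succ, Fin.cons_update] using h k.succ (Fin.cons a z)
    have hcons (b : κ 0) (y : (i : Fin N) → κ i.succ) :
        (fun i => e i (Fin.cons b y i)) = Fin.cons (e 0 b) fun i => e i.succ (y i) := by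
      funext i; cases i using Fin.cases <;> rfl
    rw [h 0 x, tucker, ← (Fin.consEquiv κ).sum_comp, Fintype.sum_prod_type]
    refine Finset.sum_congr rfl fun b _ => ?_
    rw [← Fin.cons_self_tail x, Fin.update_cons_zero, congrFun (hslice (e 0 b)), tucker,
      Finset.mul_sum]
    refine Finset.sum_congr rfl fun y _ => ?_
    simp only [Fin.consEquiv_apply, Fin.prod_univ_succ, Fin.cons_zero, Fin.cons_succ, hcons]
    ring

theorem eq_tucker_of_unfold_eq_mul [∀ i, Fintype (κ i)]
    (A : ((i : Fin n) → ι i) → ℝ) (e : (i : Fin n) → κ i → ι i)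
    (M : (i : Fin n) → Matrix (ι i) (κ i) ℝ)
    (h : ∀ k, unfold A k = M k * (unfold A k).submatrix (e k) id) :
    A = tucker (fun y => A fun i => e i (y i)) M :=
  eq_tucker_of_forall_eq_sum_update A e M fun k x => by
    simpa only [unfold_apply_update, Function.update_eq_self, mul_apply, submatrix_apply, id]
      using congrFun (congrFun (h k) (x k)) fun j => x j.1

theorem rank_unfold_tucker_le [∀ i, Fintype (ι i)] [∀ i, Fintype (κ i)]
    (T : ((i : Fin n) → κ i) → ℝ) (M : (i : Fin n) → Matrix (ι i) (κ i) ℝ) (j : Fin n) :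
    (unfold (tucker T M) j).rank ≤ (unfold T j).rank := by
  rw [unfold_tucker]
  exact (rank_mul_le_left _ _).trans (rank_mul_le_right _ _)

def chidoriJEquiv (I : (i : Fin n) → Finset (ι i)) (j : Fin n) :
    ((k : {k : Fin n // k ≠ j}) → I k.1) ≃ chidoriJ I j :=
  Equiv.subtypePiEquivPi.symm.trans (Equiv.subtypeEquivRight fun _ => Fintype.mem_piFinset.symm)

theorem unfold_subT (A : ((i : Fin n) → ι i) → ℝ)
    (I : (i : Fin n) → Finset (ι i)) (j : Fin n) :
    unfold (subT A I) j = (Umat A I (chidoriJ I) j).submatrix id (chidoriJEquiv I j) := by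
  ext a z
  simp only [Umat, submatrix_apply, unfold_apply, subT]
  congr 1 with i
  by_cases h : i = j
  · subst h; simp
  · simp only [dif_neg h, Equiv.piSplitAt_symm_apply]
    rfl

theorem rank_unfold_subT (A : ((i : Fin n) → ι i) → ℝ)
    (I : (i : Fin n) → Finset (ι i)) (j : Fin n) :
    (unfold (subT A I) j).rank = (Umat A I (chidoriJ I) j).rank := by
  rw [unfold_subT]
  exact rank_submatrix _ (Equiv.refl _) _

end Tensor

section Chidori

variable {ι : Fin n → Type*} [∀ i, Fintype (ι i)] (A : ((i : Fin n) → ι i) → ℝ)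
  (I : (i : Fin n) → Finset (ι i))

theorem rank_umat_le_rank_rowsub (i : Fin n) :
    (Umat A I (chidoriJ I) i).rank ≤ (rowsub (unfold A i) (I i)).rank :=
  rank_submatrix_le (rowsub (unfold A i) (I i)) id Subtype.val

theorem rank_umat_eq_of_eq_tucker (M : (i : Fin n) → Matrix (ι i) (I i) ℝ)
    (hM : A = tucker (subT A I) M) (i : Fin n) :
    (Umat A I (chidoriJ I) i).rank = (unfold A i).rank := by
  refine ((rank_umat_le_rank_rowsub A I i).trans (rank_submatrix_le _ _ _)).antisymm ?_
  conv_lhs => rw [hM]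
  exact (rank_unfold_tucker_le _ _ i).trans (rank_unfold_subT A I i).le

theorem rank_umat_eq_of_rank_rowsub_eq
    (h : ∀ i, (rowsub (unfold A i) (I i)).rank = (unfold A i).rank) (i : Fin n) :
    (Umat A I (chidoriJ I) i).rank = (unfold A i).rank := by
  choose M hM using fun k => exists_eq_mul_submatrix_of_rank_eq (unfold A k) Subtype.val (h k)
  exact rank_umat_eq_of_eq_tucker A I M (eq_tucker_of_unfold_eq_mul A _ M hM) i

theorem eq_tucker_subT_of_rank_umat
    (h : ∀ i, (Umat A I (chidoriJ I) i).rank = (unfold A i).rank) :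
    A = tucker (subT A I) fun i => Cmat A (chidoriJ I) i * pinv (Umat A I (chidoriJ I) i) :=
  eq_tucker_of_unfold_eq_mul A (fun _ => Subtype.val) _ fun k =>
    eq_submatrix_mul_pinv_mul_of_rank_eq _ _ _ (h k)

theorem eq_tucker_cmat_of_rank_umat
    (h : ∀ i, (Umat A I (chidoriJ I) i).rank = (unfold A i).rank) :
    A = tucker A fun i => Cmat A (chidoriJ I) i * pinv (Cmat A (chidoriJ I) i) :=
  eq_tucker_of_unfold_eq_mul A (fun _ => id) _ fun k => by
    have hC : (Cmat A (chidoriJ I) k).rank = (unfold A k).rank :=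
      (rank_submatrix_le _ _ _).antisymm <|
        h k ▸ rank_submatrix_le (Cmat A (chidoriJ I) k) Subtype.val id
    rw [submatrix_id_id]
    exact (submatrix_mul_pinv_mul_of_rank_eq _ _ hC).symm

end Chidori

/-- **Chidori CUR characterization** (Theorem `cor: CUR Char1`), with
`Jᵢ = ⊗_{j≠i} Iⱼ`: equivalence of
(i) `rank Uᵢ = rᵢ` for all `i`;
(ii) `A = ℛ ×₁ (C₁U₁†) ×₂ ⋯ ×ₙ (CₙUₙ†)`;
(iii) the multilinear rank of `ℛ` is `(r₁,…,rₙ)`;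
(iv) `rank (A_(i)(Iᵢ,:)) = rᵢ` for all `i`;
and moreover any of these implies `A = A ×₁ (C₁C₁†) ×₂ ⋯ ×ₙ (CₙCₙ†)`. -/
theorem chidori_cur_characterization {n : ℕ} {d : Fin n → ℕ}
    (A : ((i : Fin n) → Fin (d i)) → ℝ) (r : Fin n → ℕ)
    (hrank : ∀ i, (unfold A i).rank = r i)
    (I : (i : Fin n) → Finset (Fin (d i))) :
    (((∀ i, (Umat A I (chidoriJ I) i).rank = r i) ↔
        A = tucker (subT A I) fun i =>
          Cmat A (chidoriJ I) i * pinv (Umat A I (chidoriJ I) i)) ∧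
      ((A = tucker (subT A I) fun i =>
          Cmat A (chidoriJ I) i * pinv (Umat A I (chidoriJ I) i)) ↔
        (∀ i, (unfold (subT A I) i).rank = r i)) ∧
      ((∀ i, (unfold (subT A I) i).rank = r i) ↔
        (∀ i, (rowsub (unfold A i) (I i)).rank = r i))) ∧
    ((∀ i, (Umat A I (chidoriJ I) i).rank = r i) →
      A = tucker A fun i => Cmat A (chidoriJ I) i * pinv (Cmat A (chidoriJ I) i)) := by
  obtain rfl : (fun i => (unfold A i).rank) = r := funext hrank
  have h_subT : (∀ i, (unfold (subT A I) i).rank = (unfold A i).rank) ↔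
      ∀ i, (Umat A I (chidoriJ I) i).rank = (unfold A i).rank := by
    simp only [rank_unfold_subT]
  exact ⟨⟨⟨eq_tucker_subT_of_rank_umat A I, rank_umat_eq_of_eq_tucker A I _⟩,
    ⟨h_subT.mpr ∘ rank_umat_eq_of_eq_tucker A I _,
      eq_tucker_subT_of_rank_umat A I ∘ h_subT.mp⟩,
    ⟨fun h i => (rank_submatrix_le _ _ _).antisymm
        (h_subT.mp h i ▸ rank_umat_le_rank_rowsub A I i),
      h_subT.mpr ∘ rank_umat_eq_of_rank_rowsub_eq A I⟩⟩,
    eq_tucker_cmat_of_rank_umat A I⟩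

end TCUR
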